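/- arXiv:cs/0701079 — 2 statements merged into one kernel-verified Lean document; each statement's English description precedes it below -/
import Mathlib

section
/- Fix θ ∈ (0,1). Then, as n → ∞, f(n,θ) = ln(θn) + (1+θ)/(2θn) − (θ²+6θ−1)/(12θ²n²) + O(1/n³); that is, there exist C > 0 and N such that for all n ≥ N, |f(n,θ) − ln(θn) − (1+θ)/(2θn) + (θ²+6θ−1)/(12θ²n²)| ≤ C/n³. -/
/-!
Write `f(n, θ) = E log (1 + X)` with `X ~ Bin(n, θ)` and put `m = 1 + nθ`, `t = (X - nθ) / m`, so
that `log (1 + X) = log m + log (1 + t)`. Expanding `log (1 + t)` to fifth order expresses `f`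
through the central moments `M_j = E (X - nθ)^j`. Since `Bin(n + 1, θ)` is `Bin(n, θ)` plus an
independent Bernoulli variable, the `M_j` obey a binomial-convolution recursion in `n`, which gives
`M_2, M_3, M_4` exactly and `M_j = O(n^⌊j/2⌋)` in general. The Taylor remainder is `O(t^6)` except
on the far lower tail `t < -1/2`, where `log` blows up like `log m`; there it is bounded by
`4 t^8 / (1 + t) ≤ 4 m t^8`, so the sixth and eighth moments bound its expectation by `O(n^{-3})`,
as they do for the `M_5` term. The remaining terms are explicit functions of `u = 1 / (θ n)`,
analytic at `u = 0`, whose expansion to second order is the claimed one.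
-/

open Finset Real Filter Asymptotics Topology

noncomputable section

/-- The binomial sum `f(m, θ) = Σ_{k=0}^{m} C(m,k) θ^k (1−θ)^{m−k} ln(1+k)`. -/
def fBer (m : ℕ) (θ : ℝ) : ℝ :=
  ∑ k ∈ Finset.range (m + 1),
    (m.choose k : ℝ) * θ ^ k * (1 - θ) ^ (m - k) * Real.log (1 + (k : ℝ))

def binomialExpectation (n : ℕ) (θ : ℝ) (h : ℕ → ℝ) : ℝ :=
  ∑ k ∈ range (n + 1), (n.choose k : ℝ) * θ ^ k * (1 - θ) ^ (n - k) * h k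

section

variable {n : ℕ} {θ : ℝ}

theorem binomialExpectation_const (c : ℝ) : binomialExpectation n θ (fun _ => c) = c := by
  have h := add_pow θ (1 - θ) n
  rw [add_sub_cancel, one_pow] at h
  simp only [binomialExpectation, ← sum_mul]
  rw [(sum_congr rfl fun _ _ => by ring).trans h.symm, one_mul]

theorem binomialExpectation_add (f g : ℕ → ℝ) :
    binomialExpectation n θ (fun k => f k + g k) =
      binomialExpectation n θ f + binomialExpectation n θ g := by
  simp only [binomialExpectation, mul_add, sum_add_distrib]

theorem binomialExpectation_sub (f g : ℕ → ℝ) :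
    binomialExpectation n θ (fun k => f k - g k) =
      binomialExpectation n θ f - binomialExpectation n θ g := by
  simp only [binomialExpectation, mul_sub, sum_sub_distrib]

theorem binomialExpectation_div_const (f : ℕ → ℝ) (c : ℝ) :
    binomialExpectation n θ (fun k => f k / c) = binomialExpectation n θ f / c := by
  simp only [binomialExpectation, sum_div, mul_div_assoc]

theorem binomialExpectation_sum {ι : Type*} (s : Finset ι) (f : ι → ℕ → ℝ) :
    binomialExpectation n θ (fun k => ∑ i ∈ s, f i k) =
      ∑ i ∈ s, binomialExpectation n θ (f i) := by
  simp only [binomialExpectation, mul_sum]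
  exact sum_comm

theorem binomialExpectation_const_mul (c : ℝ) (f : ℕ → ℝ) :
    binomialExpectation n θ (fun k => c * f k) = c * binomialExpectation n θ f := by
  simp only [binomialExpectation, mul_sum]
  exact sum_congr rfl fun k _ => by ring

theorem binomialExpectation_zero (h : ℕ → ℝ) : binomialExpectation 0 θ h = h 0 := by
  simp [binomialExpectation]

theorem binomialExpectation_one (h : ℕ → ℝ) :
    binomialExpectation 1 θ h = (1 - θ) * h 0 + θ * h 1 := by
  simp [binomialExpectation, sum_range_succ]

theorem binomialExpectation_succ (h : ℕ → ℝ) :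
    binomialExpectation (n + 1) θ h =
      binomialExpectation n θ (fun k => θ * h (k + 1) + (1 - θ) * h k) := by
  have key := sum_choose_succ_mul (fun i j => θ ^ i * (1 - θ) ^ j * h i) n
  rw [← sum_add_distrib] at key
  refine ((sum_congr rfl fun i _ => by ring).trans key).trans (sum_congr rfl fun i hi => ?_)
  rw [Nat.sub_add_comm (Nat.lt_succ_iff.1 (mem_range.1 hi))]
  ring

theorem abs_binomialExpectation_le (hθ0 : 0 ≤ θ) (hθ1 : θ ≤ 1) {f g : ℕ → ℝ}
    (hfg : ∀ k ≤ n, |f k| ≤ g k) :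
    |binomialExpectation n θ f| ≤ binomialExpectation n θ g := by
  refine (abs_sum_le_sum_abs _ _).trans (sum_le_sum fun k hk => ?_)
  have hw : 0 ≤ (n.choose k : ℝ) * θ ^ k * (1 - θ) ^ (n - k) := by
    have : 0 ≤ 1 - θ := by linarith
    positivity
  rw [abs_mul, abs_of_nonneg hw]
  exact mul_le_mul_of_nonneg_left (hfg k (Nat.lt_succ_iff.1 (mem_range.1 hk))) hw

end

def binomialCentralMoment (n : ℕ) (θ : ℝ) (j : ℕ) : ℝ :=
  binomialExpectation n θ (fun k => ((k : ℝ) - n * θ) ^ j)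

theorem binomialCentralMoment_zero_left (θ : ℝ) (j : ℕ) :
    binomialCentralMoment 0 θ j = 0 ^ j := by
  simp [binomialCentralMoment, binomialExpectation_zero]

theorem binomialCentralMoment_one_left (θ : ℝ) (j : ℕ) :
    binomialCentralMoment 1 θ j = (1 - θ) * (-θ) ^ j + θ * (1 - θ) ^ j := by
  simp [binomialCentralMoment, binomialExpectation_one]

theorem binomialCentralMoment_zero_right (n : ℕ) (θ : ℝ) :
    binomialCentralMoment n θ 0 = 1 := by
  simp [binomialCentralMoment, binomialExpectation_const]

theorem binomialCentralMoment_succ (n : ℕ) (θ : ℝ) (j : ℕ) :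
    binomialCentralMoment (n + 1) θ j =
      ∑ i ∈ range (j + 1),
        (j.choose i * binomialCentralMoment 1 θ (j - i)) * binomialCentralMoment n θ i := by
  have hpt : ∀ k : ℕ,
      θ * (((k + 1 : ℕ) : ℝ) - (n + 1 : ℕ) * θ) ^ j +
          (1 - θ) * ((k : ℝ) - (n + 1 : ℕ) * θ) ^ j =
        ∑ i ∈ range (j + 1),
          (j.choose i * binomialCentralMoment 1 θ (j - i)) * ((k : ℝ) - n * θ) ^ i := by
    intro k
    have e1 : ((k + 1 : ℕ) : ℝ) - (n + 1 : ℕ) * θ = ((k : ℝ) - n * θ) + (1 - θ) := by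
      push_cast; ring
    have e2 : (k : ℝ) - (n + 1 : ℕ) * θ = ((k : ℝ) - n * θ) + -θ := by push_cast; ring
    rw [e1, e2, add_pow, add_pow, mul_sum, mul_sum, ← sum_add_distrib]
    refine sum_congr rfl fun i _ => ?_
    rw [binomialCentralMoment_one_left]
    ring
  simp only [binomialCentralMoment, binomialExpectation_succ, hpt, binomialExpectation_sum,
    binomialExpectation_const_mul]

theorem binomialCentralMoment_one_right (n : ℕ) (θ : ℝ) :
    binomialCentralMoment n θ 1 = 0 := by
  induction n with
  | zero => simp [binomialCentralMoment_zero_left]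
  | succ n ih =>
    rw [binomialCentralMoment_succ]
    simp only [sum_range_succ, sum_range_zero, Nat.choose, Nat.reduceSub, ih,
      binomialCentralMoment_one_left, binomialCentralMoment_zero_right]
    ring

theorem binomialCentralMoment_two_right (n : ℕ) (θ : ℝ) :
    binomialCentralMoment n θ 2 = n * θ * (1 - θ) := by
  induction n with
  | zero => simp [binomialCentralMoment_zero_left]
  | succ n ih =>
    rw [binomialCentralMoment_succ]
    simp only [sum_range_succ, sum_range_zero, Nat.choose, Nat.reduceSub, ih,
      binomialCentralMoment_one_left, binomialCentralMoment_zero_right,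
      binomialCentralMoment_one_right]
    push_cast
    ring

theorem binomialCentralMoment_three_right (n : ℕ) (θ : ℝ) :
    binomialCentralMoment n θ 3 = n * θ * (1 - θ) * (1 - 2 * θ) := by
  induction n with
  | zero => simp [binomialCentralMoment_zero_left]
  | succ n ih =>
    rw [binomialCentralMoment_succ]
    simp only [sum_range_succ, sum_range_zero, Nat.choose, Nat.reduceSub, ih,
      binomialCentralMoment_one_left, binomialCentralMoment_zero_right,
      binomialCentralMoment_one_right, binomialCentralMoment_two_right]
    push_cast
    ring

theorem binomialCentralMoment_four_right (n : ℕ) (θ : ℝ) :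
    binomialCentralMoment n θ 4 =
      3 * (n * θ * (1 - θ)) ^ 2 + n * θ * (1 - θ) * (1 - 6 * θ * (1 - θ)) := by
  induction n with
  | zero => simp [binomialCentralMoment_zero_left]
  | succ n ih =>
    rw [binomialCentralMoment_succ]
    simp only [sum_range_succ, sum_range_zero, Nat.choose, Nat.reduceSub, ih,
      binomialCentralMoment_one_left, binomialCentralMoment_zero_right,
      binomialCentralMoment_one_right, binomialCentralMoment_two_right,
      binomialCentralMoment_three_right]
    push_cast
    ring

theorem abs_le_mul_pow_of_abs_sub_le {a : ℕ → ℝ} {K : ℝ} {p : ℕ} (h0 : a 0 = 0)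
    (h : ∀ n, |a (n + 1) - a n| ≤ K * ((n : ℝ) + 1) ^ p) (n : ℕ) :
    |a n| ≤ K * ((n : ℝ) + 1) ^ (p + 1) := by
  have hK : 0 ≤ K := by simpa using (abs_nonneg _).trans (h 0)
  suffices hn : |a n| ≤ K * n * ((n : ℝ) + 1) ^ p by
    refine hn.trans ?_
    rw [pow_succ, mul_assoc]
    exact mul_le_mul_of_nonneg_left
      (by nlinarith [pow_nonneg (by positivity : (0 : ℝ) ≤ n + 1) p]) hK
  induction n with
  | zero => simp [h0]
  | succ n ih =>
    calc |a (n + 1)| ≤ |a n| + |a (n + 1) - a n| := by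
          simpa using abs_add_le (a n) (a (n + 1) - a n)
      _ ≤ K * n * ((n : ℝ) + 1) ^ p + K * ((n : ℝ) + 1) ^ p := add_le_add ih (h n)
      _ = K * ((n + 1 : ℕ) : ℝ) * ((n : ℝ) + 1) ^ p := by push_cast; ring
      _ ≤ K * ((n + 1 : ℕ) : ℝ) * (((n + 1 : ℕ) : ℝ) + 1) ^ p := by gcongr; linarith

theorem exists_abs_binomialCentralMoment_le (θ : ℝ) (j : ℕ) :
    ∃ C, ∀ n : ℕ, |binomialCentralMoment n θ j| ≤ C * ((n : ℝ) + 1) ^ (j / 2) := by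
  induction j using Nat.strong_induction_on with
  | _ j ih =>
  match j with
  | 0 => exact ⟨1, fun n => by simp [binomialCentralMoment_zero_right]⟩
  | 1 => exact ⟨0, fun n => by simp [binomialCentralMoment_one_right]⟩
  | j + 2 =>
    choose! C hC using ih
    have hC0 : ∀ i < j + 2, 0 ≤ C i := fun i hi => by
      simpa using (abs_nonneg _).trans (hC i hi 0)
    set c : ℕ → ℝ := fun i => (j + 2).choose i * binomialCentralMoment 1 θ (j + 2 - i)
    have hstep : ∀ n,
        binomialCentralMoment (n + 1) θ (j + 2) - binomialCentralMoment n θ (j + 2) =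
          ∑ i ∈ range (j + 1), c i * binomialCentralMoment n θ i := by
      intro n
      rw [binomialCentralMoment_succ, sum_range_succ, sum_range_succ]
      simp [c, binomialCentralMoment_one_left, binomialCentralMoment_one_right]
    refine ⟨∑ i ∈ range (j + 1), |c i| * C i, fun n => ?_⟩
    rw [show (j + 2) / 2 = j / 2 + 1 by omega]
    refine abs_le_mul_pow_of_abs_sub_le (a := fun n => binomialCentralMoment n θ (j + 2))
      (by simp [binomialCentralMoment_zero_left]) (fun n => ?_) n
    rw [hstep, sum_mul]
    refine (abs_sum_le_sum_abs _ _).trans (sum_le_sum fun i hi => ?_)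
    have hi : i ≤ j := Nat.lt_succ_iff.1 (mem_range.1 hi)
    rw [abs_mul, mul_assoc]
    gcongr
    refine (hC i (by omega) n).trans ?_
    gcongr
    · exact hC0 i (by omega)
    · linarith

theorem abs_log_sub_add_sum_range_le_of_nonpos {x : ℝ} (hx : x ≤ 0) (n : ℕ) :
    |(∑ i ∈ range n, x ^ (i + 1) / (i + 1)) + log (1 - x)| ≤ |x| ^ (n + 1) := by
  set F : ℝ → ℝ := fun y => (∑ i ∈ range n, y ^ (i + 1) / (i + 1)) + log (1 - y)
  have hF : ∀ y ≤ 0, HasDerivAt F (-y ^ n / (1 - y)) y := fun y hy => by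
    have h1y : 1 - y ≠ 0 := by linarith
    have := HasDerivAt.fun_add
      (.fun_sum (u := range n) fun i _ => (hasDerivAt_pow (i + 1) y).div_const ((i : ℝ) + 1))
      (((hasDerivAt_id' y).const_sub 1).log h1y)
    refine this.congr_deriv ?_
    have hy1 : y - 1 ≠ 0 := by linarith
    rw [sum_congr rfl fun i _ => by rw [Nat.cast_add_one, add_tsub_cancel_right,
      mul_div_cancel_left₀ _ (Nat.cast_add_one_pos i).ne'], geom_sum_eq (by linarith) n]
    field_simp
    ring
  have hbound : ∀ y ∈ Set.Icc x 0, ‖-y ^ n / (1 - y)‖ ≤ |x| ^ n := fun y hy => by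
    rw [Real.norm_eq_abs, abs_div, abs_neg, abs_pow, abs_of_pos (by linarith [hy.2] : 0 < 1 - y)]
    calc |y| ^ n / (1 - y) ≤ |y| ^ n := div_le_self (by positivity) (by linarith [hy.2])
      _ ≤ |x| ^ n := by
        refine pow_le_pow_left₀ (abs_nonneg y) ?_ n
        rw [abs_of_nonpos hy.2, abs_of_nonpos hx]
        linarith [hy.1]
  have hmvt := (convex_Icc x 0).norm_image_sub_le_of_norm_hasDerivWithin_le
    (fun y hy => (hF y hy.2).hasDerivWithinAt) hbound (Set.left_mem_Icc.2 hx)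
    (Set.right_mem_Icc.2 hx)
  have hF0 : F 0 = 0 := by simp [F]
  rwa [hF0, zero_sub, norm_neg, zero_sub, norm_neg, Real.norm_eq_abs, Real.norm_eq_abs,
    ← pow_succ] at hmvt

def logTaylorRemainder (t : ℝ) : ℝ :=
  log (1 + t) - (t - t ^ 2 / 2 + t ^ 3 / 3 - t ^ 4 / 4 + t ^ 5 / 5)

theorem abs_logTaylorRemainder_le {t : ℝ} (ht : -1 < t) :
    |logTaylorRemainder t| ≤ 2 * t ^ 6 + 4 * t ^ 8 / (1 + t) := by
  have h1t : 0 < 1 + t := by linarith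
  have hseries : logTaylorRemainder t =
      (∑ i ∈ range 5, (-t) ^ (i + 1) / (i + 1)) + log (1 - -t) := by
    simp only [logTaylorRemainder, sum_range_succ, sum_range_zero, sub_neg_eq_add]
    ring
  rw [hseries]
  rcases le_total 0 t with h | h
  · refine (abs_log_sub_add_sum_range_le_of_nonpos (neg_nonpos.2 h) 5).trans ?_
    rw [abs_neg, abs_of_nonneg h]
    have : 0 ≤ 4 * t ^ 8 / (1 + t) := by positivity
    nlinarith [pow_nonneg h 6]
  · have hlt : |-t| < 1 := by rw [abs_neg, abs_of_nonpos h]; linarith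
    refine (Real.abs_log_sub_add_sum_range_le hlt 5).trans ?_
    rw [abs_neg, abs_of_nonpos h, sub_neg_eq_add, Even.neg_pow (by decide)]
    rcases le_total (-1 / 2) t with h' | h'
    · rw [div_le_iff₀ h1t]
      have : 0 ≤ 4 * t ^ 8 / (1 + t) * (1 + t) := by positivity
      nlinarith [pow_nonneg (sq_nonneg t) 3]
    · have h4 : 0 ≤ 4 * t ^ 2 - 1 := by nlinarith
      have : t ^ 6 ≤ 4 * t ^ 8 := by nlinarith [mul_nonneg (pow_nonneg (sq_nonneg t) 3) h4]
      have : 0 ≤ 2 * t ^ 6 := by positivity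
      calc t ^ 6 / (1 + t) ≤ 4 * t ^ 8 / (1 + t) := by gcongr
        _ ≤ _ := by linarith

theorem isBigO_binomialCentralMoment_div_pow {θ : ℝ} (hθ0 : 0 < θ) (hθ1 : θ ≤ 1) {j k : ℕ}
    (hjk : j / 2 + 3 ≤ k) :
    (fun n : ℕ => binomialCentralMoment n θ j / (1 + n * θ) ^ k) =O[atTop]
      (fun n : ℕ => ((n : ℝ) ^ 3)⁻¹) := by
  obtain ⟨C, hC⟩ := exists_abs_binomialCentralMoment_le θ j
  have hC0 : 0 ≤ C := by simpa using (abs_nonneg _).trans (hC 0)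
  refine IsBigO.of_bound (C / θ ^ k) ?_
  filter_upwards [eventually_gt_atTop 0] with n hn
  have hn' : (0 : ℝ) < n := by exact_mod_cast hn
  have hm : θ * (n + 1) ≤ 1 + n * θ := by nlinarith
  have hpow : (n : ℝ) ^ 3 * ((n : ℝ) + 1) ^ (j / 2) ≤ ((n : ℝ) + 1) ^ k :=
    calc (n : ℝ) ^ 3 * ((n : ℝ) + 1) ^ (j / 2)
        ≤ ((n : ℝ) + 1) ^ 3 * ((n : ℝ) + 1) ^ (j / 2) := by gcongr; linarith
      _ = ((n : ℝ) + 1) ^ (3 + j / 2) := by ring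
      _ ≤ ((n : ℝ) + 1) ^ k := pow_le_pow_right₀ (by linarith) (by omega)
  rw [Real.norm_eq_abs, Real.norm_eq_abs, abs_div, abs_inv, abs_pow, abs_pow,
    abs_of_pos (by positivity : 0 < 1 + n * θ), abs_of_pos hn']
  calc |binomialCentralMoment n θ j| / (1 + n * θ) ^ k
      ≤ C * (n + 1) ^ (j / 2) / (θ * (n + 1)) ^ k :=
        div_le_div₀ (by positivity) (hC n) (by positivity)
          (pow_le_pow_left₀ (by positivity) hm k)
    _ = C / θ ^ k * ((n + 1) ^ (j / 2) / (n + 1) ^ k) := by rw [mul_pow]; ring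
    _ ≤ C / θ ^ k * ((n : ℝ) ^ 3)⁻¹ := by
        gcongr
        rw [div_le_iff₀ (by positivity), inv_mul_eq_div, le_div_iff₀ (by positivity)]
        linarith

theorem fBer_eq_taylor_expansion {θ : ℝ} (hθ : 0 ≤ θ) (n : ℕ) :
    fBer n θ = log (1 + n * θ)
      - binomialCentralMoment n θ 2 / (2 * (1 + n * θ) ^ 2)
      + binomialCentralMoment n θ 3 / (3 * (1 + n * θ) ^ 3)
      - binomialCentralMoment n θ 4 / (4 * (1 + n * θ) ^ 4)
      + binomialCentralMoment n θ 5 / (5 * (1 + n * θ) ^ 5)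
      + binomialExpectation n θ (fun k => logTaylorRemainder ((k - n * θ) / (1 + n * θ))) := by
  have hm : 0 < 1 + n * θ := by positivity
  have hpt : ∀ k : ℕ, log (1 + k) = log (1 + n * θ)
      + (((k : ℝ) - n * θ) ^ 1 / (1 + n * θ)
        - ((k : ℝ) - n * θ) ^ 2 / (2 * (1 + n * θ) ^ 2)
        + ((k : ℝ) - n * θ) ^ 3 / (3 * (1 + n * θ) ^ 3)
        - ((k : ℝ) - n * θ) ^ 4 / (4 * (1 + n * θ) ^ 4)
        + ((k : ℝ) - n * θ) ^ 5 / (5 * (1 + n * θ) ^ 5))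
      + logTaylorRemainder ((k - n * θ) / (1 + n * θ)) := by
    intro k
    have h1 : 1 + ((k : ℝ) - n * θ) / (1 + n * θ) = (1 + k) / (1 + n * θ) := by
      field_simp; ring
    rw [logTaylorRemainder, h1, log_div (by positivity) hm.ne']
    field_simp
    ring
  have hM1 := binomialCentralMoment_one_right n θ
  unfold binomialCentralMoment at hM1 ⊢
  rw [show fBer n θ = binomialExpectation n θ (fun k => log (1 + k)) from rfl]
  simp only [hpt, binomialExpectation_add, binomialExpectation_sub, binomialExpectation_div_const,
    binomialExpectation_const, hM1]
  ring

theorem abs_binomialExpectation_logTaylorRemainder_le {θ : ℝ} (hθ0 : 0 ≤ θ) (hθ1 : θ ≤ 1)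
    (n : ℕ) :
    |binomialExpectation n θ (fun k => logTaylorRemainder ((k - n * θ) / (1 + n * θ)))| ≤
      2 * binomialCentralMoment n θ 6 / (1 + n * θ) ^ 6 +
        4 * binomialCentralMoment n θ 8 / (1 + n * θ) ^ 7 := by
  have hm : 0 < 1 + n * θ := by positivity
  have hrhs : 2 * binomialCentralMoment n θ 6 / (1 + n * θ) ^ 6 +
      4 * binomialCentralMoment n θ 8 / (1 + n * θ) ^ 7 =
      binomialExpectation n θ (fun k => 2 * ((k : ℝ) - n * θ) ^ 6 / (1 + n * θ) ^ 6 +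
        4 * ((k : ℝ) - n * θ) ^ 8 / (1 + n * θ) ^ 7) := by
    simp only [binomialCentralMoment, binomialExpectation_add, binomialExpectation_div_const,
      binomialExpectation_const_mul]
  rw [hrhs]
  refine abs_binomialExpectation_le hθ0 hθ1 fun k _ => ?_
  have h1t : 1 + ((k : ℝ) - n * θ) / (1 + n * θ) = (1 + k) / (1 + n * θ) := by
    field_simp; ring
  have ht : -1 < ((k : ℝ) - n * θ) / (1 + n * θ) := by
    have : 0 < (1 + (k : ℝ)) / (1 + n * θ) := by positivity
    linarith
  refine (abs_logTaylorRemainder_le ht).trans ?_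
  rw [h1t]
  have h8 : 4 * (((k : ℝ) - n * θ) / (1 + n * θ)) ^ 8 / ((1 + k) / (1 + n * θ)) =
      4 * ((k : ℝ) - n * θ) ^ 8 / (1 + n * θ) ^ 7 / (1 + k) := by
    field_simp
  rw [h8, div_pow, ← mul_div_assoc]
  have hk : (1 : ℝ) ≤ 1 + k := by simp
  have := div_le_self (by positivity : 0 ≤ 4 * ((k : ℝ) - n * θ) ^ 8 / (1 + n * θ) ^ 7) hk
  linarith

theorem isBigO_log_moment_terms_sub_expansion {θ : ℝ} (hθ : 0 < θ) :
    (fun n : ℕ => log (1 + n * θ)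
      - n * θ * (1 - θ) / (2 * (1 + n * θ) ^ 2)
      + n * θ * (1 - θ) * (1 - 2 * θ) / (3 * (1 + n * θ) ^ 3)
      - (3 * (n * θ * (1 - θ)) ^ 2 + n * θ * (1 - θ) * (1 - 6 * θ * (1 - θ))) /
          (4 * (1 + n * θ) ^ 4)
      - log (θ * n) - (1 + θ) / (2 * θ * n) + (θ ^ 2 + 6 * θ - 1) / (12 * θ ^ 2 * n ^ 2))
      =O[atTop] (fun n : ℕ => ((n : ℝ) ^ 3)⁻¹) := by
  set u : ℕ → ℝ := fun n => (θ * n)⁻¹ with hu_def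
  -- The moment terms, as functions of `u`, are
  -- `(1 + θ) u / 2 - (θ² + 6θ - 1) u² / 12 - u + u² / 2 + u³ g u`.
  set g : ℝ → ℝ := fun v => (1 - θ) * (3 * (1 + 2 * θ - 6 * θ ^ 2) - 6 * (θ + 3) * v
    - 2 * (2 * θ + 11) * v ^ 2 - (θ + 7) * v ^ 3) / (12 * (1 + v) ^ 4)
  have hu : Tendsto u atTop (𝓝 0) :=
    tendsto_inv_atTop_zero.comp (tendsto_natCast_atTop_atTop.const_mul_atTop hθ)
  have hlog : (fun n => log (1 + u n) - u n + u n ^ 2 / 2) =O[atTop] (fun n => u n ^ 3) := by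
    refine isBigO_of_le _ fun n => ?_
    have hu0 : 0 ≤ u n := by positivity
    have := abs_log_sub_add_sum_range_le_of_nonpos (neg_nonpos.2 hu0) 2
    rw [Real.norm_eq_abs, Real.norm_eq_abs, abs_pow, ← abs_neg (u n)]
    convert this using 2
    simp only [sum_range_succ, sum_range_zero, Nat.cast_zero, Nat.cast_one, sub_neg_eq_add]
    ring
  have hg : (fun n => u n ^ 3 * g (u n)) =O[atTop] (fun n => u n ^ 3) := by
    have hgc : ContinuousAt g 0 := by fun_prop (disch := norm_num)
    simpa using (isBigO_refl (fun n => u n ^ 3) atTop).mul ((hgc.tendsto.comp hu).isBigO_one ℝ)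
  have hu3 : (fun n => u n ^ 3) =O[atTop] (fun n : ℕ => ((n : ℝ) ^ 3)⁻¹) := by
    refine ((isBigO_refl _ atTop).const_mul_left (θ ^ 3)⁻¹).congr_left fun n => ?_
    simp only [hu_def, mul_inv, mul_pow, inv_pow]
  refine ((hlog.add hg).trans hu3).congr' ?_ EventuallyEq.rfl
  filter_upwards [eventually_ne_atTop 0] with n hn
  have hn' : (n : ℝ) ≠ 0 := Nat.cast_ne_zero.2 hn
  have hsplit : log (1 + n * θ) = log (θ * n) + log (1 + u n) := by
    rw [← log_mul (by positivity) (by positivity)]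
    congr 1
    simp only [hu_def]
    field_simp
    ring
  rw [hsplit]
  generalize log (θ * n) = a
  generalize log (1 + u n) = b
  simp only [hu_def, g]
  field_simp
  ring

theorem isBigO_fBer_sub_expansion {θ : ℝ} (hθ0 : 0 < θ) (hθ1 : θ < 1) :
    (fun n : ℕ => fBer n θ - log (θ * n) - (1 + θ) / (2 * θ * n) +
      (θ ^ 2 + 6 * θ - 1) / (12 * θ ^ 2 * n ^ 2)) =O[atTop] (fun n : ℕ => ((n : ℝ) ^ 3)⁻¹) := by
  have hM5 := isBigO_binomialCentralMoment_div_pow hθ0 hθ1.le (j := 5) (k := 5) (by norm_num)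
  have hM6 := isBigO_binomialCentralMoment_div_pow hθ0 hθ1.le (j := 6) (k := 6) (by norm_num)
  have hM8 := isBigO_binomialCentralMoment_div_pow hθ0 hθ1.le (j := 8) (k := 7) (by norm_num)
  have hrem : (fun n : ℕ => binomialExpectation n θ
      (fun k => logTaylorRemainder ((k - n * θ) / (1 + n * θ)))) =O[atTop]
        (fun n : ℕ => ((n : ℝ) ^ 3)⁻¹) := by
    refine (isBigO_of_le _ fun n => ?_).trans
      ((hM6.const_mul_left 2).add (hM8.const_mul_left 4))
    rw [Real.norm_eq_abs, Real.norm_eq_abs]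
    refine (abs_binomialExpectation_logTaylorRemainder_le hθ0.le hθ1.le n).trans
      (le_of_eq_of_le ?_ (le_abs_self _))
    ring
  have hM5' : (fun n : ℕ => binomialCentralMoment n θ 5 / (5 * (1 + n * θ) ^ 5)) =O[atTop]
      (fun n : ℕ => ((n : ℝ) ^ 3)⁻¹) :=
    (hM5.const_mul_left (1 / 5)).congr_left fun n => by field_simp
  refine (((isBigO_log_moment_terms_sub_expansion hθ0).add hM5').add hrem).congr_left fun n => ?_
  rw [fBer_eq_taylor_expansion hθ0.le, binomialCentralMoment_two_right,
    binomialCentralMoment_three_right, binomialCentralMoment_four_right]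
  ring

/-- asymptotics
`f(n,θ) = ln(θn) + (1+θ)/(2θn) − (θ²+6θ−1)/(12θ²n²) + O(1/n³)`. -/
theorem stmt_12 (θ : ℝ) (hθ : θ ∈ Set.Ioo (0 : ℝ) 1) :
    ∃ C : ℝ, 0 < C ∧ ∃ N : ℕ, ∀ n : ℕ, N ≤ n →
      |fBer n θ - Real.log (θ * (n : ℝ)) - (1 + θ) / (2 * θ * (n : ℝ)) +
          (θ ^ 2 + 6 * θ - 1) / (12 * θ ^ 2 * (n : ℝ) ^ 2)| ≤ C / (n : ℝ) ^ 3 := by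
  obtain ⟨C, hC, hbound⟩ := (isBigO_fBer_sub_expansion hθ.1 hθ.2).exists_pos
  obtain ⟨N, hN⟩ := eventually_atTop.1 hbound.bound
  refine ⟨C, hC, N, fun n hn => ?_⟩
  simpa [div_eq_mul_inv] using hN n hn

end
end

section
/- For every p ∈ (0,1) with q = 1−p and every integer n ≥ 1, the average empirical entropy satisfies the two-sided bound −1/n ≤ Σ_{|w|=n} Pr(w)·F(w) − H(p) ≤ 0. -/
/-!
Write `x = k/n` for the relative weight of a word and `D(x‖p)` for the binary relative entropy.
Pointwise, `H(x) = H(p) - D(x‖p) - (x - p) log(p/q)`, and the linear term averages to zero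
because `k/n` has mean `p`; so the defect is `-E[D(k/n‖p)]`. Gibbs' inequality gives
`D ≥ 0`, and `log y ≤ y - 1` gives the chi-square bound `D(x‖p) ≤ (x - p)²/(pq)`, whose
average is `Var(k/n)/(pq) = 1/n`.
-/

open Finset Real

noncomputable section

/-- Weight (number of 1-bits) of a binary word. -/
def bwt {n : ℕ} (w : Fin n → Bool) : ℕ := (Finset.univ.filter fun i => w i = true).card

/-- Probability of a binary word under a memoryless source with parameter `p`. -/
def prW (p : ℝ) {n : ℕ} (w : Fin n → Bool) : ℝ := p ^ bwt w * (1 - p) ^ (n - bwt w)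

/-- Binary entropy (natural logarithm). -/
def Hent (p : ℝ) : ℝ := -(p * Real.log p) - (1 - p) * Real.log (1 - p)

/-- Empirical entropy of a binary word (the convention `0 * log 0 = 0` holds
automatically since `Real.log 0 = 0`). -/
def Femp {n : ℕ} (w : Fin n → Bool) : ℝ :=
  -((bwt w : ℝ) / n) * Real.log ((bwt w : ℝ) / n)
    - (((n : ℝ) - bwt w) / n) * Real.log (((n : ℝ) - bwt w) / n)

def binKL (x p : ℝ) : ℝ := x * log (x / p) + (1 - x) * log ((1 - x) / (1 - p))

lemma mul_log_div_eq (a : ℝ) {b : ℝ} (hb : b ≠ 0) : a * log (a / b) = a * log a - a * log b := by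
  rcases eq_or_ne a 0 with rfl | ha
  · simp
  · rw [log_div ha hb, mul_sub]

lemma sub_le_mul_log_div {a b : ℝ} (ha : 0 ≤ a) (hb : 0 < b) : a - b ≤ a * log (a / b) := by
  rcases ha.eq_or_lt with rfl | ha
  · simpa using hb.le
  · have h := one_sub_inv_le_log_of_pos (div_pos ha hb)
    calc a - b = a * (1 - (a / b)⁻¹) := by field_simp
      _ ≤ a * log (a / b) := by gcongr

lemma mul_log_div_le {a b : ℝ} (ha : 0 ≤ a) (hb : 0 < b) : a * log (a / b) ≤ a * (a / b - 1) := by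
  rcases ha.eq_or_lt with rfl | ha
  · simp
  · exact mul_le_mul_of_nonneg_left (log_le_sub_one_of_pos (div_pos ha hb)) ha.le

lemma Hent_eq_sub_binKL {p : ℝ} (hp : p ∈ Set.Ioo (0 : ℝ) 1) (x : ℝ) :
    Hent x = Hent p - binKL x p - (x - p) * (log p - log (1 - p)) := by
  rw [Hent, Hent, binKL, mul_log_div_eq _ hp.1.ne', mul_log_div_eq _ (sub_pos.2 hp.2).ne']
  ring

section binKL

variable {x p : ℝ}

lemma binKL_nonneg (hx : x ∈ Set.Icc (0 : ℝ) 1) (hp : p ∈ Set.Ioo (0 : ℝ) 1) : 0 ≤ binKL x p := by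
  have h₁ := sub_le_mul_log_div hx.1 hp.1
  have h₂ := sub_le_mul_log_div (sub_nonneg.2 hx.2) (sub_pos.2 hp.2)
  rw [binKL]
  linarith

lemma binKL_le_sq_div (hx : x ∈ Set.Icc (0 : ℝ) 1) (hp : p ∈ Set.Ioo (0 : ℝ) 1) :
    binKL x p ≤ (x - p) ^ 2 / (p * (1 - p)) := by
  have hq : 0 < 1 - p := sub_pos.2 hp.2
  have hp₀ : p ≠ 0 := hp.1.ne'
  have h₁ := mul_log_div_le hx.1 hp.1
  have h₂ := mul_log_div_le (sub_nonneg.2 hx.2) hq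
  calc binKL x p ≤ x * (x / p - 1) + (1 - x) * ((1 - x) / (1 - p) - 1) := add_le_add h₁ h₂
    _ = (x - p) ^ 2 / (p * (1 - p)) := by field_simp; ring

end binKL

theorem sum_mul_Hent_sub_Hent_bounds {ι : Type*} (s : Finset ι) (B x : ι → ℝ) {p v : ℝ}
    (hp : p ∈ Set.Ioo (0 : ℝ) 1) (hB : ∀ i ∈ s, 0 ≤ B i) (hx : ∀ i ∈ s, x i ∈ Set.Icc (0 : ℝ) 1)
    (h₀ : ∑ i ∈ s, B i = 1) (h₁ : ∑ i ∈ s, B i * x i = p)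
    (h₂ : ∑ i ∈ s, B i * (x i - p) ^ 2 = v) :
    -(v / (p * (1 - p))) ≤ (∑ i ∈ s, B i * Hent (x i)) - Hent p ∧
      (∑ i ∈ s, B i * Hent (x i)) - Hent p ≤ 0 := by
  have hdefect : (∑ i ∈ s, B i * Hent (x i)) - Hent p = -∑ i ∈ s, B i * binKL (x i) p := by
    simp_rw [Hent_eq_sub_binKL hp (x _), mul_sub, sum_sub_distrib, ← sum_mul, h₀,
      ← mul_assoc, ← sum_mul, mul_sub, sum_sub_distrib, h₁, ← sum_mul, h₀]
    ring
  have hupper : ∑ i ∈ s, B i * binKL (x i) p ≤ v / (p * (1 - p)) := by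
    calc ∑ i ∈ s, B i * binKL (x i) p ≤ ∑ i ∈ s, B i * ((x i - p) ^ 2 / (p * (1 - p))) :=
          sum_le_sum fun i hi => mul_le_mul_of_nonneg_left (binKL_le_sq_div (hx i hi) hp) (hB i hi)
      _ = v / (p * (1 - p)) := by simp_rw [← mul_div_assoc, ← sum_div, h₂]
  have hlower : 0 ≤ ∑ i ∈ s, B i * binKL (x i) p :=
    sum_nonneg fun i hi => mul_nonneg (hB i hi) (binKL_nonneg (hx i hi) hp)
  rw [hdefect]
  exact ⟨neg_le_neg hupper, neg_nonpos.2 hlower⟩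

section Words

variable {n : ℕ}

lemma bwt_le (w : Fin n → Bool) : bwt w ≤ n :=
  (card_filter_le _ _).trans_eq (card_fin n)

lemma sum_comp_bwt {M : Type*} [AddCommMonoid M] (g : ℕ → M) :
    ∑ w : Fin n → Bool, g (bwt w) = ∑ k ∈ range (n + 1), n.choose k • g k := by
  calc ∑ w : Fin n → Bool, g (bwt w) = ∑ s ∈ (univ : Finset (Fin n)).powerset, g #s :=
        sum_nbij' (fun w => univ.filter fun i => w i = true) (fun s i => decide (i ∈ s))
          (by simp) (by simp) (fun w _ => by funext i; simp) (fun s _ => by ext i; simp)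
          (fun w _ => rfl)
    _ = ∑ k ∈ range (n + 1), n.choose k • g k := by rw [sum_powerset_apply_card, card_fin]

lemma sum_prW_mul_comp_bwt (p : ℝ) (f : ℕ → ℝ) :
    ∑ w : Fin n → Bool, prW p w * f (bwt w) =
      ∑ k ∈ range (n + 1), f k * (bernsteinPolynomial ℝ n k).eval p := by
  simp only [prW]
  rw [sum_comp_bwt (fun k => p ^ k * (1 - p) ^ (n - k) * f k)]
  refine sum_congr rfl fun k _ => ?_
  simp [bernsteinPolynomial, nsmul_eq_mul]
  ring

lemma sum_prW (p : ℝ) : ∑ w : Fin n → Bool, prW p w = 1 := by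
  have h := congrArg (Polynomial.eval p) (bernsteinPolynomial.sum ℝ n)
  have h' := sum_prW_mul_comp_bwt (n := n) p fun _ => 1
  simp only [Polynomial.eval_finsetSum, Polynomial.eval_one, mul_one, one_mul] at h h'
  rw [h', h]

lemma sum_prW_mul_bwt (p : ℝ) : ∑ w : Fin n → Bool, prW p w * bwt w = n * p := by
  have h := congrArg (Polynomial.eval p) (bernsteinPolynomial.sum_smul ℝ n)
  simp only [Polynomial.eval_finsetSum, nsmul_eq_mul, Polynomial.eval_mul, Polynomial.eval_natCast,
    Polynomial.eval_X] at h
  rw [sum_prW_mul_comp_bwt p fun k => (k : ℝ), h]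

lemma sum_prW_mul_sub_sq (p : ℝ) :
    ∑ w : Fin n → Bool, prW p w * (n * p - bwt w) ^ 2 = n * p * (1 - p) := by
  have h := congrArg (Polynomial.eval p) (bernsteinPolynomial.variance ℝ n)
  simp only [Polynomial.eval_finsetSum, Polynomial.eval_mul, Polynomial.eval_pow,
    Polynomial.eval_sub, Polynomial.eval_X, Polynomial.eval_one,
    Polynomial.eval_natCast, nsmul_eq_mul] at h
  rw [sum_prW_mul_comp_bwt p fun k => ((n : ℝ) * p - k) ^ 2, h, mul_assoc]

lemma prW_nonneg {p : ℝ} (hp : p ∈ Set.Icc (0 : ℝ) 1) (w : Fin n → Bool) : 0 ≤ prW p w :=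
  mul_nonneg (pow_nonneg hp.1 _) (pow_nonneg (sub_nonneg.2 hp.2) _)

lemma bwt_div_mem_Icc (w : Fin n → Bool) : (bwt w / n : ℝ) ∈ Set.Icc (0 : ℝ) 1 :=
  ⟨by positivity, div_le_one_of_le₀ (by exact_mod_cast bwt_le w) n.cast_nonneg⟩

lemma Femp_eq_Hent (hn : n ≠ 0) (w : Fin n → Bool) : Femp w = Hent (bwt w / n) := by
  rw [Femp, Hent, one_sub_div (Nat.cast_ne_zero.2 hn)]
  ring

lemma sum_prW_mul_bwt_div (hn : n ≠ 0) (p : ℝ) :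
    ∑ w : Fin n → Bool, prW p w * (bwt w / n) = p := by
  simp_rw [mul_div_assoc', ← sum_div, sum_prW_mul_bwt]
  field_simp

lemma sum_prW_mul_bwt_div_sub_sq (hn : n ≠ 0) (p : ℝ) :
    ∑ w : Fin n → Bool, prW p w * (bwt w / n - p) ^ 2 = p * (1 - p) / n := by
  have hn' : (n : ℝ) ≠ 0 := Nat.cast_ne_zero.2 hn
  have hsq (w : Fin n → Bool) : (bwt w / n - p) ^ 2 = (n * p - bwt w) ^ 2 / n ^ 2 := by
    field_simp; ring
  simp_rw [hsq, mul_div_assoc', ← sum_div, sum_prW_mul_sub_sq]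
  field_simp

end Words

theorem stmt_14_general (p : ℝ) (hp : p ∈ Set.Ioo (0 : ℝ) 1)
    (n : ℕ) (hn : 1 ≤ n) :
    -(1 / (n : ℝ)) ≤ (∑ w : Fin n → Bool, prW p w * Femp w) - Hent p ∧
      (∑ w : Fin n → Bool, prW p w * Femp w) - Hent p ≤ 0 := by
  have hn₀ : n ≠ 0 := Nat.one_le_iff_ne_zero.1 hn
  have hpq : p * (1 - p) ≠ 0 := mul_ne_zero hp.1.ne' (sub_pos.2 hp.2).ne'
  simp_rw [Femp_eq_Hent hn₀]
  obtain ⟨hlower, hupper⟩ := sum_mul_Hent_sub_Hent_bounds univ (prW p) (fun w => bwt w / n) hp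
    (fun w _ => prW_nonneg (Set.Ioo_subset_Icc_self hp) w) (fun w _ => bwt_div_mem_Icc w)
    (sum_prW p) (sum_prW_mul_bwt_div hn₀ p) (sum_prW_mul_bwt_div_sub_sq hn₀ p)
  rw [div_right_comm, div_self hpq] at hlower
  exact ⟨hlower, hupper⟩

/-- Krichevsky: two-sided bound for the average empirical entropy:
`−1/n ≤ Σ_{|w|=n} Pr(w)F(w) − H(p) ≤ 0`. -/
theorem stmt_14 (p q : ℝ) (hp : p ∈ Set.Ioo (0 : ℝ) 1) (hq : q = 1 - p)
    (n : ℕ) (hn : 1 ≤ n) :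
    -(1 / (n : ℝ)) ≤ (∑ w : Fin n → Bool, prW p w * Femp w) - Hent p ∧
      (∑ w : Fin n → Bool, prW p w * Femp w) - Hent p ≤ 0 :=
  stmt_14_general p hp n hn

end
end
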